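/- arXiv:2406.02894 — 2 statements merged into one kernel-verified Lean document; each statement's English description precedes it below -/
import Mathlib

section
/- Fix n, m > 0 and 0 < a₁ < a₂, and let p_{a_i} be the density of Beta(n·a_i, m·a_i). Then the ratio t(x) = p_{a₁}(x)/p_{a₂}(x) satisfies t(x) = K · x^(-n(a₂-a₁)) · (1-x)^(-m(a₂-a₁)) for some constant K > 0, is strictly convex on (0,1), and t(x) → ∞ as x → 0⁺ and x → 1⁻. -/
open Set Filter Topology Real ProbabilityTheory

/-!
The normalising constants only contribute the factor `K = B(na₂, ma₂) / B(na₁, ma₁) > 0`,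
and `x ^ (-c) * (1 - x) ^ (-d) = exp (c * (-log x) + d * (-log (1 - x)))` with `c, d > 0`. The
exponent is strictly convex because `-log` is, and composing with the convex increasing `exp`
keeps strict convexity. The blow-up at the endpoints comes from `x ^ (-c)` at `0` and
`(1 - x) ^ (-d)` at `1`, the other factor tending to `1`.
-/

lemma Complex.betaIntegral_ofReal (u v : ℝ) :
    Complex.betaIntegral u v = ↑(∫ t in (0:ℝ)..1, t ^ (u - 1) * (1 - t) ^ (v - 1)) := by
  rw [Complex.betaIntegral, ← intervalIntegral.integral_ofReal]
  refine intervalIntegral.integral_congr fun t ht => ?_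
  rw [uIcc_of_le zero_le_one] at ht
  rw [Complex.ofReal_mul, Complex.ofReal_cpow ht.1, Complex.ofReal_cpow (sub_nonneg.2 ht.2)]
  push_cast; rfl

lemma ProbabilityTheory.beta_eq_intervalIntegral {u v : ℝ} (hu : 0 < u) (hv : 0 < v) :
    beta u v = ∫ t in (0:ℝ)..1, t ^ (u - 1) * (1 - t) ^ (v - 1) := by
  rw [beta_eq_betaIntegralReal u v hu hv, Complex.betaIntegral_ofReal, Complex.ofReal_re]

lemma rpow_mul_one_sub_rpow_div {x : ℝ} (hx : x ∈ Ioo (0:ℝ) 1) (u₁ v₁ u₂ v₂ : ℝ) :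
    x ^ u₁ * (1 - x) ^ v₁ / (x ^ u₂ * (1 - x) ^ v₂) =
      x ^ (u₁ - u₂) * (1 - x) ^ (v₁ - v₂) := by
  rw [rpow_sub hx.1, rpow_sub (sub_pos.2 hx.2), mul_div_mul_comm]

lemma tendsto_one_sub_nhdsLT_one : Tendsto (fun x : ℝ => 1 - x) (𝓝[<] 1) (𝓝[>] 0) := by
  refine tendsto_nhdsWithin_iff.2
    ⟨?_, eventually_nhdsWithin_of_forall fun _ hx => sub_pos.2 (mem_Iio.1 hx)⟩
  have : Tendsto (fun x : ℝ => 1 - x) (𝓝 1) (𝓝 (1 - 1)) := tendsto_const_nhds.sub tendsto_id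
  simpa using this.mono_left nhdsWithin_le_nhds

lemma tendsto_rpow_neg_mul_one_sub_rpow_nhdsGT_zero {c : ℝ} (hc : 0 < c) (d : ℝ) :
    Tendsto (fun x : ℝ => x ^ (-c) * (1 - x) ^ d) (𝓝[>] 0) atTop := by
  have hone : Tendsto (fun x : ℝ => (1 - x) ^ d) (𝓝[>] 0) (𝓝 1) := by
    have : ContinuousAt (fun x : ℝ => (1 - x) ^ d) 0 :=
      (continuousAt_const.sub continuousAt_id).rpow_const (Or.inl (by norm_num))
    simpa using this.tendsto.mono_left nhdsWithin_le_nhds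
  exact (tendsto_rpow_neg_nhdsGT_zero (neg_neg_of_pos hc)).atTop_mul_pos one_pos hone

lemma tendsto_rpow_mul_one_sub_rpow_neg_nhdsLT_one (c : ℝ) {d : ℝ} (hd : 0 < d) :
    Tendsto (fun x : ℝ => x ^ c * (1 - x) ^ (-d)) (𝓝[<] 1) atTop := by
  have := (tendsto_rpow_neg_mul_one_sub_rpow_nhdsGT_zero hd c).comp tendsto_one_sub_nhdsLT_one
  simpa [Function.comp_def, mul_comm] using this

lemma StrictConvexOn.exp {E : Type*} [AddCommMonoid E] [Module ℝ E] {s : Set E} {f : E → ℝ}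
    (hf : StrictConvexOn ℝ s f) : StrictConvexOn ℝ s fun x => Real.exp (f x) :=
  ⟨hf.1, fun _ hx _ hy hxy _ _ ha hb hab =>
    (Real.exp_lt_exp.2 (hf.2 hx hy hxy ha hb hab)).trans_le
      (convexOn_exp.2 (mem_univ _) (mem_univ _) ha.le hb.le hab)⟩

lemma StrictConvexOn.const_mul {E : Type*} [AddCommMonoid E] [Module ℝ E] {s : Set E}
    {f : E → ℝ} {c : ℝ} (hc : 0 < c) (hf : StrictConvexOn ℝ s f) :
    StrictConvexOn ℝ s fun x => c * f x := by
  refine ⟨hf.1, fun x hx y hy hxy a b ha hb hab => ?_⟩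
  have := mul_lt_mul_of_pos_left (hf.2 hx hy hxy ha hb hab) hc
  simp only [smul_eq_mul] at this ⊢
  linarith

lemma strictConvexOn_rpow_neg_mul_one_sub_rpow_neg {c d : ℝ} (hc : 0 < c) (hd : 0 ≤ d) :
    StrictConvexOn ℝ (Ioo 0 1) fun x : ℝ => x ^ (-c) * (1 - x) ^ (-d) := by
  have hlog : StrictConvexOn ℝ (Ioo 0 1) fun x : ℝ => c * -log x :=
    ((strictConcaveOn_log_Ioi.neg).subset Ioo_subset_Ioi_self (convex_Ioo 0 1)).const_mul hc
  have hlog_one_sub : ConvexOn ℝ (Ioo 0 1) fun x : ℝ => d * -log (1 - x) := by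
    have := (strictConcaveOn_log_Ioi.concaveOn.neg.comp_affineMap
      (AffineMap.const ℝ ℝ (1:ℝ) - AffineMap.id ℝ ℝ)).subset
      (fun x hx => show (0:ℝ) < 1 - x from sub_pos.2 hx.2) (convex_Ioo 0 1)
    exact this.smul hd
  refine (hlog.add_convexOn hlog_one_sub).exp.congr fun x hx => ?_
  have hx1 : 0 < 1 - x := sub_pos.2 hx.2
  simp only [Pi.add_apply, rpow_def_of_pos hx.1, rpow_def_of_pos hx1, ← Real.exp_add]
  ring_nf

/-- The ratio of two Beta(na_i, ma_i) densities is K·x^(-n(a₂-a₁))·(1-x)^(-m(a₂-a₁)),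
strictly convex on (0,1), tending to ∞ at both endpoints. -/
theorem stmt_8 (n m a₁ a₂ : ℝ) (hn : 0 < n) (hm : 0 < m)
    (ha₁ : 0 < a₁) (ha : a₁ < a₂)
    (p : ℝ → ℝ → ℝ)
    (hp : ∀ a, ∀ x, p a x = x ^ (n*a - 1) * (1 - x) ^ (m*a - 1)
        / (∫ t in (0:ℝ)..1, t ^ (n*a - 1) * (1 - t) ^ (m*a - 1))) :
    (∃ K : ℝ, 0 < K ∧ ∀ x ∈ Set.Ioo (0:ℝ) 1,
      p a₁ x / p a₂ x = K * x ^ (-(n*(a₂-a₁))) * (1 - x) ^ (-(m*(a₂-a₁)))) ∧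
    StrictConvexOn ℝ (Set.Ioo (0:ℝ) 1) (fun x => p a₁ x / p a₂ x) ∧
    Filter.Tendsto (fun x => p a₁ x / p a₂ x) (nhdsWithin 0 (Set.Ioi 0)) Filter.atTop ∧
    Filter.Tendsto (fun x => p a₁ x / p a₂ x) (nhdsWithin 1 (Set.Iio 1)) Filter.atTop := by
  have hp_beta : ∀ a, 0 < a →
      p a = fun x => x ^ (n*a - 1) * (1 - x) ^ (m*a - 1) / beta (n*a) (m*a) := fun a ha =>
    funext fun x => by rw [hp, beta_eq_intervalIntegral (mul_pos hn ha) (mul_pos hm ha)]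
  have hc : 0 < n * (a₂ - a₁) := mul_pos hn (sub_pos.2 ha)
  have hd : 0 < m * (a₂ - a₁) := mul_pos hm (sub_pos.2 ha)
  set K := beta (n*a₂) (m*a₂) / beta (n*a₁) (m*a₁)
  have hK : 0 < K := div_pos
    (beta_pos (mul_pos hn (ha₁.trans ha)) (mul_pos hm (ha₁.trans ha)))
    (beta_pos (mul_pos hn ha₁) (mul_pos hm ha₁))
  have hratio : EqOn (fun x => p a₁ x / p a₂ x)
      (fun x => K * (x ^ (-(n*(a₂-a₁))) * (1 - x) ^ (-(m*(a₂-a₁))))) (Ioo 0 1) := by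
    intro x hx
    simp only [hp_beta a₁ ha₁, hp_beta a₂ (ha₁.trans ha), div_div_div_comm,
      rpow_mul_one_sub_rpow_div hx]
    rw [show n*a₁ - 1 - (n*a₂ - 1) = -(n*(a₂-a₁)) by ring,
      show m*a₁ - 1 - (m*a₂ - 1) = -(m*(a₂-a₁)) by ring,
      div_div_eq_mul_div, mul_div_assoc, mul_comm]
  refine ⟨⟨K, hK, fun x hx => (hratio hx).trans (mul_assoc ..).symm⟩,
    ((strictConvexOn_rpow_neg_mul_one_sub_rpow_neg hc hd.le).const_mul hK).congr hratio.symm,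
    ?_, ?_⟩
  · exact ((tendsto_rpow_neg_mul_one_sub_rpow_nhdsGT_zero hc _).const_mul_atTop hK).congr'
      (eventuallyEq_of_mem (Ioo_mem_nhdsGT one_pos) hratio.symm)
  · exact ((tendsto_rpow_mul_one_sub_rpow_neg_nhdsLT_one _ hd).const_mul_atTop hK).congr'
      (eventuallyEq_of_mem (Ioo_mem_nhdsLT one_pos) hratio.symm)
end

section
/- Fix n, m > 0 with n ≥ m and 0 < a₁ < a₂, and let F_{a_i} be the c.d.f. of Beta(n·a_i, m·a_i). Then there exists a unique x* ∈ (0,1) such that F_{a₁}(x) > F_{a₂}(x) for all x ∈ (0, x*) and F_{a₁}(x) < F_{a₂}(x) for all x ∈ (x*, 1). (That is, Beta(na₂, ma₂) is more bunched around x* than Beta(na₁, ma₁).) -/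
/-!
Let `G = F_{a₁} - F_{a₂}`, so `G 0 = G 1 = 0`. The ratio of the two normalised densities is
proportional to `exp ((a₂ - a₁) φ)` with `φ x = n log x + m log (1 - x)`, so `G' > 0` exactly
where `φ < K` for a constant `K`. The function `φ` increases strictly up to its mode `n / (n + m)`,
then decreases strictly, and tends to `-∞` at both ends; `K` lies below its maximum, since
otherwise `G` would be strictly increasing. Hence `G'` is positive, negative, positive on three
consecutive intervals: `G` rises from `0`, crosses `0` once on the way down, and climbs back to `0`.
-/

open Set Filter Topology MeasureTheory Real

noncomputable def betaKernel (α β t : ℝ) : ℝ := t ^ (α - 1) * (1 - t) ^ (β - 1)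

noncomputable def betaCDF (α β x : ℝ) : ℝ :=
  (∫ t in (0:ℝ)..x, betaKernel α β t) / ∫ t in (0:ℝ)..1, betaKernel α β t

section BetaKernel

variable {α β : ℝ}

lemma betaKernel_one_sub (α β t : ℝ) : betaKernel α β (1 - t) = betaKernel β α t := by
  rw [betaKernel, betaKernel, sub_sub_cancel, mul_comm]

lemma betaKernel_pos {t : ℝ} (ht : t ∈ Ioo 0 1) : 0 < betaKernel α β t :=
  mul_pos (rpow_pos_of_pos ht.1 _) (rpow_pos_of_pos (sub_pos.2 ht.2) _)

lemma continuousAt_betaKernel {t : ℝ} (ht : t ∈ Ioo 0 1) : ContinuousAt (betaKernel α β) t :=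
  (continuousAt_id.rpow_const (.inl ht.1.ne')).mul
    ((continuousAt_const.sub continuousAt_id).rpow_const (.inl (sub_pos.2 ht.2).ne'))

lemma intervalIntegrable_betaKernel_zero_half (hα : 0 < α) :
    IntervalIntegrable (betaKernel α β) volume 0 (1 / 2) := by
  refine (intervalIntegral.intervalIntegrable_rpow' (by linarith : -1 < α - 1)).mul_continuousOn
    fun t ht => ?_
  rw [uIcc_of_le (by norm_num)] at ht
  exact ((continuousAt_const.sub continuousAt_id).rpow_const
    (.inl (by linarith [ht.2] : (1:ℝ) - t ≠ 0))).continuousWithinAt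

lemma intervalIntegrable_betaKernel (hα : 0 < α) (hβ : 0 < β) :
    IntervalIntegrable (betaKernel α β) volume 0 1 := by
  refine (intervalIntegrable_betaKernel_zero_half hα).trans ?_
  have h := ((intervalIntegrable_betaKernel_zero_half (β := α) hβ).comp_sub_left 1).symm
  norm_num [betaKernel_one_sub] at h
  exact h

lemma intervalIntegrable_betaKernel_of_mem (hα : 0 < α) (hβ : 0 < β) {x : ℝ}
    (hx : x ∈ Icc (0:ℝ) 1) : IntervalIntegrable (betaKernel α β) volume 0 x :=
  (intervalIntegrable_betaKernel hα hβ).mono_set (by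
    rw [uIcc_of_le hx.1, uIcc_of_le zero_le_one]
    exact Icc_subset_Icc le_rfl hx.2)

lemma integral_betaKernel_pos (hα : 0 < α) (hβ : 0 < β) :
    0 < ∫ t in (0:ℝ)..1, betaKernel α β t :=
  intervalIntegral.intervalIntegral_pos_of_pos_on (intervalIntegrable_betaKernel hα hβ)
    (fun _ ht => betaKernel_pos ht) zero_lt_one

@[simp]
lemma betaCDF_zero : betaCDF α β 0 = 0 := by
  simp [betaCDF]

lemma betaCDF_one (hα : 0 < α) (hβ : 0 < β) : betaCDF α β 1 = 1 :=
  div_self (integral_betaKernel_pos hα hβ).ne'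

lemma continuousOn_betaCDF (hα : 0 < α) (hβ : 0 < β) :
    ContinuousOn (betaCDF α β) (Icc 0 1) := by
  have h := intervalIntegral.continuousOn_primitive_interval'
    (intervalIntegrable_betaKernel hα hβ) left_mem_uIcc
  rw [uIcc_of_le zero_le_one] at h
  exact h.div_const _

lemma hasDerivAt_betaCDF (hα : 0 < α) (hβ : 0 < β) {x : ℝ} (hx : x ∈ Ioo 0 1) :
    HasDerivAt (betaCDF α β) (betaKernel α β x / ∫ t in (0:ℝ)..1, betaKernel α β t) x :=
  (intervalIntegral.integral_hasDerivAt_right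
    (intervalIntegrable_betaKernel_of_mem hα hβ (Ioo_subset_Icc_self hx))
    ((continuousOn_of_forall_continuousAt fun _ ht => continuousAt_betaKernel ht)
      |>.stronglyMeasurableAtFilter isOpen_Ioo _ hx)
    (continuousAt_betaKernel hx)).div_const _

end BetaKernel

-- `log (x ^ n * (1 - x) ^ m)` on `(0, 1)`
noncomputable def logKernel (n m x : ℝ) : ℝ := n * log x + m * log (1 - x)

section LogKernel

variable {n m : ℝ}

lemma logKernel_one_sub (n m x : ℝ) : logKernel n m (1 - x) = logKernel m n x := by
  rw [logKernel, logKernel, sub_sub_cancel, add_comm]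

lemma hasDerivAt_logKernel (n m : ℝ) {x : ℝ} (hx : x ∈ Ioo 0 1) :
    HasDerivAt (logKernel n m) (n / x - m / (1 - x)) x := by
  have h := ((hasDerivAt_log hx.1.ne').const_mul n).add
    (((hasDerivAt_id x).const_sub 1).log (sub_pos.2 hx.2).ne' |>.const_mul m)
  refine h.congr_deriv ?_
  simp only [id]
  ring

lemma continuousOn_logKernel (n m : ℝ) : ContinuousOn (logKernel n m) (Ioo 0 1) :=
  fun _ hx => (hasDerivAt_logKernel n m hx).continuousAt.continuousWithinAt

lemma logKernel_strictMonoOn (hn : 0 < n) (hm : 0 < m) :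
    StrictMonoOn (logKernel n m) (Ioc 0 (n / (n + m))) := by
  have hmode : n / (n + m) < 1 := (div_lt_one (by linarith)).2 (by linarith)
  refine strictMonoOn_of_hasDerivWithinAt_pos (f' := fun x => n / x - m / (1 - x)) (convex_Ioc _ _)
    ((continuousOn_logKernel n m).mono fun x hx => ⟨hx.1, hx.2.trans_lt hmode⟩)
    (fun x hx => ?_) fun x hx => ?_
  · rw [interior_Ioc] at hx
    exact (hasDerivAt_logKernel n m ⟨hx.1, hx.2.trans hmode⟩).hasDerivWithinAt
  · rw [interior_Ioc] at hx
    obtain ⟨hx0, hxmode⟩ := hx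
    rw [lt_div_iff₀ (by linarith)] at hxmode
    have h1x : 0 < 1 - x := by nlinarith
    rw [sub_pos, div_lt_div_iff₀ h1x hx0]
    nlinarith

lemma logKernel_strictAntiOn (hn : 0 < n) (hm : 0 < m) :
    StrictAntiOn (logKernel n m) (Ico (n / (n + m)) 1) := by
  have hmode : 1 - n / (n + m) = m / (m + n) := by
    field_simp
    ring
  intro x hx y hy hxy
  rw [← logKernel_one_sub m n x, ← logKernel_one_sub m n y]
  refine logKernel_strictMonoOn hm hn ⟨sub_pos.2 hy.2, ?_⟩ ⟨sub_pos.2 hx.2, ?_⟩ (by linarith)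
  · linarith [hy.1]
  · linarith [hx.1]

lemma logKernel_lt_logKernel_mode (hn : 0 < n) (hm : 0 < m) {x : ℝ} (hx : x ∈ Ioo 0 1)
    (hne : x ≠ n / (n + m)) : logKernel n m x < logKernel n m (n / (n + m)) := by
  have hmode : n / (n + m) ∈ Ioo (0:ℝ) 1 :=
    ⟨div_pos hn (by linarith), (div_lt_one (by linarith)).2 (by linarith)⟩
  rcases hne.lt_or_gt with h | h
  · exact logKernel_strictMonoOn hn hm ⟨hx.1, h.le⟩ ⟨hmode.1, le_rfl⟩ h
  · exact logKernel_strictAntiOn hn hm ⟨le_rfl, hmode.2⟩ ⟨h.le, hx.2⟩ h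

lemma tendsto_logKernel_nhdsGT_zero (hn : 0 < n) (m : ℝ) :
    Tendsto (logKernel n m) (𝓝[>] 0) atBot := by
  have h : Tendsto (fun x => m * log (1 - x)) (𝓝[>] 0) (𝓝 (m * log (1 - 0))) :=
    ((continuousAt_const.sub continuousAt_id).log (by norm_num)
      |>.const_mul m).tendsto.mono_left nhdsWithin_le_nhds
  exact (tendsto_log_nhdsGT_zero.const_mul_atBot hn).atBot_add h

lemma tendsto_logKernel_nhdsLT_one (n : ℝ) (hm : 0 < m) :
    Tendsto (logKernel n m) (𝓝[<] 1) atBot := by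
  have h : Tendsto (fun x : ℝ => 1 - x) (𝓝[<] 1) (𝓝[>] 0) := by
    refine tendsto_nhdsWithin_of_tendsto_nhds_of_eventually_within _ ?_ ?_
    · exact ((continuous_sub_left (1:ℝ)).tendsto' 1 0 (sub_self 1)).mono_left nhdsWithin_le_nhds
    · filter_upwards [self_mem_nhdsWithin] with x (hx : x < 1) using sub_pos.2 hx
  convert (tendsto_logKernel_nhdsGT_zero hm n).comp h using 1
  funext x
  exact (logKernel_one_sub m n x).symm

end LogKernel

lemma betaKernel_div_eq_exp (n m a : ℝ) {B x : ℝ} (hx : x ∈ Ioo 0 1) (hB : 0 < B) :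
    betaKernel (n * a) (m * a) x / B = exp (a * logKernel n m x - log B) / (x * (1 - x)) := by
  have h1x : 0 < 1 - x := sub_pos.2 hx.2
  rw [betaKernel, rpow_sub hx.1, rpow_sub h1x, rpow_one, rpow_one, rpow_def_of_pos hx.1,
    rpow_def_of_pos h1x, div_mul_div_comm, div_right_comm, ← exp_log hB, ← exp_add, ← exp_sub,
    logKernel, log_exp]
  ring_nf

lemma betaKernel_div_lt_betaKernel_div_iff {n m a a' B B' x : ℝ} (hx : x ∈ Ioo 0 1)
    (hB : 0 < B) (hB' : 0 < B') :
    betaKernel (n * a) (m * a) x / B < betaKernel (n * a') (m * a') x / B' ↔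
      a * logKernel n m x - log B < a' * logKernel n m x - log B' := by
  rw [betaKernel_div_eq_exp n m a hx hB, betaKernel_div_eq_exp n m a' hx hB',
    div_lt_div_iff_of_pos_right (mul_pos hx.1 (sub_pos.2 hx.2)), exp_lt_exp]

lemma exists_crossings_of_unimodal {f : ℝ → ℝ} {a p b K : ℝ} (hap : a < p) (hpb : p < b)
    (hf : ContinuousOn f (Ioo a b)) (hmono : StrictMonoOn f (Ioc a p))
    (hanti : StrictAntiOn f (Ico p b)) (ha : Tendsto f (𝓝[>] a) atBot)
    (hb : Tendsto f (𝓝[<] b) atBot) (hK : K < f p) :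
    ∃ t₁ t₂, a < t₁ ∧ t₁ < t₂ ∧ t₂ < b ∧ (∀ x ∈ Ioo a t₁, f x < K) ∧
      (∀ x ∈ Ioo t₁ t₂, K < f x) ∧ ∀ x ∈ Ioo t₂ b, f x < K := by
  obtain ⟨c, hfc, hc⟩ := ((ha.eventually (eventually_lt_atBot K)).and (Ioo_mem_nhdsGT hap)).exists
  obtain ⟨d, hfd, hd⟩ := ((hb.eventually (eventually_lt_atBot K)).and (Ioo_mem_nhdsLT hpb)).exists
  obtain ⟨t₁, ⟨hct₁, ht₁p⟩, hft₁⟩ :=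
    intermediate_value_Ioo hc.2.le (hf.mono (Icc_subset_Ioo hc.1 hpb)) ⟨hfc, hK⟩
  obtain ⟨t₂, ⟨hpt₂, ht₂d⟩, hft₂⟩ :=
    intermediate_value_Ioo' hd.1.le (hf.mono (Icc_subset_Ioo hap hd.2)) ⟨hfd, hK⟩
  have ht₁ : t₁ ∈ Ioc a p := ⟨hc.1.trans hct₁, ht₁p.le⟩
  have ht₂ : t₂ ∈ Ico p b := ⟨hpt₂.le, ht₂d.trans hd.2⟩
  refine ⟨t₁, t₂, ht₁.1, ht₁p.trans hpt₂, ht₂.2, fun x hx => ?_, fun x hx => ?_, fun x hx => ?_⟩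
  · rw [← hft₁]
    exact hmono ⟨hx.1, (hx.2.trans ht₁p).le⟩ ht₁ hx.2
  · rcases le_or_gt x p with h | h
    · rw [← hft₁]
      exact hmono ht₁ ⟨ht₁.1.trans hx.1, h⟩ hx.1
    · rw [← hft₂]
      exact hanti ⟨h.le, hx.2.trans ht₂.2⟩ ht₂ hx.2
  · rw [← hft₂]
    exact hanti ht₂ ⟨ht₂.1.trans hx.1.le, hx.2⟩ hx.1

section SignChange

variable {G g : ℝ → ℝ}

lemma strictMonoOn_Icc_of_hasDerivAt_pos {u v : ℝ} (hG : ContinuousOn G (Icc u v))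
    (hderiv : ∀ x ∈ Ioo u v, HasDerivAt G (g x) x) (hpos : ∀ x ∈ Ioo u v, 0 < g x) :
    StrictMonoOn G (Icc u v) :=
  strictMonoOn_of_hasDerivWithinAt_pos (convex_Icc u v) hG
    (by simpa only [interior_Icc] using fun x hx => (hderiv x hx).hasDerivWithinAt)
    (by simpa only [interior_Icc] using hpos)

lemma strictAntiOn_Icc_of_hasDerivAt_neg {u v : ℝ} (hG : ContinuousOn G (Icc u v))
    (hderiv : ∀ x ∈ Ioo u v, HasDerivAt G (g x) x) (hneg : ∀ x ∈ Ioo u v, g x < 0) :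
    StrictAntiOn G (Icc u v) :=
  strictAntiOn_of_hasDerivWithinAt_neg (convex_Icc u v) hG
    (by simpa only [interior_Icc] using fun x hx => (hderiv x hx).hasDerivWithinAt)
    (by simpa only [interior_Icc] using hneg)

variable {a b : ℝ}

lemma lt_of_hasDerivAt_pos_of_ne {p : ℝ} (hp : p ∈ Ioo a b) (hG : ContinuousOn G (Icc a b))
    (hderiv : ∀ x ∈ Ioo a b, HasDerivAt G (g x) x) (hpos : ∀ x ∈ Ioo a b, x ≠ p → 0 < g x) :
    G a < G b := by
  have hleft := strictMonoOn_Icc_of_hasDerivAt_pos (hG.mono (Icc_subset_Icc le_rfl hp.2.le))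
    (fun x hx => hderiv x ⟨hx.1, hx.2.trans hp.2⟩)
    (fun x hx => hpos x ⟨hx.1, hx.2.trans hp.2⟩ hx.2.ne)
  have hright := strictMonoOn_Icc_of_hasDerivAt_pos (hG.mono (Icc_subset_Icc hp.1.le le_rfl))
    (fun x hx => hderiv x ⟨hp.1.trans hx.1, hx.2⟩)
    (fun x hx => hpos x ⟨hp.1.trans hx.1, hx.2⟩ hx.1.ne')
  exact (hleft ⟨le_rfl, hp.1.le⟩ ⟨hp.1.le, le_rfl⟩ hp.1).trans
    (hright ⟨le_rfl, hp.2.le⟩ ⟨hp.2.le, le_rfl⟩ hp.2)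

lemma exists_sign_change_of_hasDerivAt {t₁ t₂ : ℝ} (h₁ : a < t₁) (h₁₂ : t₁ < t₂) (h₂ : t₂ < b)
    (hG : ContinuousOn G (Icc a b)) (hGa : G a = 0) (hGb : G b = 0)
    (hderiv : ∀ x ∈ Ioo a b, HasDerivAt G (g x) x) (hg₁ : ∀ x ∈ Ioo a t₁, 0 < g x)
    (hg₂ : ∀ x ∈ Ioo t₁ t₂, g x < 0) (hg₃ : ∀ x ∈ Ioo t₂ b, 0 < g x) :
    ∃ c ∈ Ioo a b, (∀ x ∈ Ioo a c, 0 < G x) ∧ ∀ x ∈ Ioo c b, G x < 0 := by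
  have hderiv' : ∀ {u v}, a ≤ u → v ≤ b → ∀ x ∈ Ioo u v, HasDerivAt G (g x) x :=
    fun hu hv x hx => hderiv x ⟨hu.trans_lt hx.1, hx.2.trans_le hv⟩
  have hup₁ := strictMonoOn_Icc_of_hasDerivAt_pos (hG.mono (Icc_subset_Icc le_rfl
    (h₁₂.trans h₂).le)) (hderiv' le_rfl (h₁₂.trans h₂).le) hg₁
  have hdown := strictAntiOn_Icc_of_hasDerivAt_neg (hG.mono (Icc_subset_Icc h₁.le h₂.le))
    (hderiv' h₁.le h₂.le) hg₂
  have hup₂ := strictMonoOn_Icc_of_hasDerivAt_pos (hG.mono (Icc_subset_Icc (h₁.trans h₁₂).le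
    le_rfl)) (hderiv' (h₁.trans h₁₂).le le_rfl) hg₃
  have hGt₁ : 0 < G t₁ := hGa ▸ hup₁ (left_mem_Icc.2 h₁.le) (right_mem_Icc.2 h₁.le) h₁
  have hGt₂ : G t₂ < 0 := hGb ▸ hup₂ (left_mem_Icc.2 h₂.le) (right_mem_Icc.2 h₂.le) h₂
  obtain ⟨c, hc, hGc⟩ := intermediate_value_Ioo' h₁₂.le
    (hG.mono (Icc_subset_Icc h₁.le h₂.le)) ⟨hGt₂, hGt₁⟩
  refine ⟨c, ⟨h₁.trans hc.1, hc.2.trans h₂⟩, fun x hx => ?_, fun x hx => ?_⟩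
  · rcases le_or_gt x t₁ with h | h
    · rw [← hGa]
      exact hup₁ ⟨le_rfl, h₁.le⟩ ⟨hx.1.le, h⟩ hx.1
    · rw [← hGc]
      exact hdown ⟨h.le, (hx.2.trans hc.2).le⟩ ⟨hc.1.le, hc.2.le⟩ hx.2
  · rcases le_or_gt x t₂ with h | h
    · rw [← hGc]
      exact hdown ⟨hc.1.le, hc.2.le⟩ ⟨(hc.1.trans hx.1).le, h⟩ hx.1
    · rw [← hGb]
      exact hup₂ ⟨h.le, hx.2.le⟩ ⟨h₂.le, le_rfl⟩ hx.2

lemma le_of_sign_change {u v : ℝ → ℝ} {c c' : ℝ} (hac : a ≤ c) (hc'b : c' ≤ b)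
    (hlt : ∀ x ∈ Ioo a c', v x < u x) (hgt : ∀ x ∈ Ioo c b, u x < v x) : c' ≤ c := by
  by_contra! h
  obtain ⟨z, hcz, hzc'⟩ := exists_between h
  exact (hlt z ⟨hac.trans_lt hcz, hzc'⟩).asymm (hgt z ⟨hcz, hzc'.trans_le hc'b⟩)

end SignChange

section BetaCrossing

variable {n m a₁ a₂ B₁ B₂ x : ℝ}

lemma sub_betaKernel_div_pos_iff (hx : x ∈ Ioo 0 1) (hB₁ : 0 < B₁) (hB₂ : 0 < B₂)
    (ha : a₁ < a₂) :
    0 < betaKernel (n * a₁) (m * a₁) x / B₁ - betaKernel (n * a₂) (m * a₂) x / B₂ ↔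
      logKernel n m x < (log B₂ - log B₁) / (a₂ - a₁) := by
  rw [sub_pos, betaKernel_div_lt_betaKernel_div_iff hx hB₂ hB₁, lt_div_iff₀ (sub_pos.2 ha)]
  constructor <;> intro h <;> linarith

lemma sub_betaKernel_div_neg_iff (hx : x ∈ Ioo 0 1) (hB₁ : 0 < B₁) (hB₂ : 0 < B₂)
    (ha : a₁ < a₂) :
    betaKernel (n * a₁) (m * a₁) x / B₁ - betaKernel (n * a₂) (m * a₂) x / B₂ < 0 ↔
      (log B₂ - log B₁) / (a₂ - a₁) < logKernel n m x := by
  rw [sub_neg, betaKernel_div_lt_betaKernel_div_iff hx hB₁ hB₂, div_lt_iff₀ (sub_pos.2 ha)]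
  constructor <;> intro h <;> linarith

lemma exists_betaCDF_crossing (hn : 0 < n) (hm : 0 < m) (ha₁ : 0 < a₁) (ha : a₁ < a₂) :
    ∃ c ∈ Ioo (0:ℝ) 1,
      (∀ x ∈ Ioo 0 c, betaCDF (n * a₂) (m * a₂) x < betaCDF (n * a₁) (m * a₁) x) ∧
      ∀ x ∈ Ioo c 1, betaCDF (n * a₁) (m * a₁) x < betaCDF (n * a₂) (m * a₂) x := by
  have hα₁ := mul_pos hn ha₁
  have hβ₁ := mul_pos hm ha₁
  have hα₂ := mul_pos hn (ha₁.trans ha)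
  have hβ₂ := mul_pos hm (ha₁.trans ha)
  have hmode : n / (n + m) ∈ Ioo (0:ℝ) 1 :=
    ⟨div_pos hn (by linarith), (div_lt_one (by linarith)).2 (by linarith)⟩
  set B₁ := ∫ t in (0:ℝ)..1, betaKernel (n * a₁) (m * a₁) t
  set B₂ := ∫ t in (0:ℝ)..1, betaKernel (n * a₂) (m * a₂) t
  have hB₁ : 0 < B₁ := integral_betaKernel_pos hα₁ hβ₁
  have hB₂ : 0 < B₂ := integral_betaKernel_pos hα₂ hβ₂
  set G := fun x => betaCDF (n * a₁) (m * a₁) x - betaCDF (n * a₂) (m * a₂) x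
  have hderiv : ∀ x ∈ Ioo (0:ℝ) 1, HasDerivAt G _ x := fun x hx =>
    (hasDerivAt_betaCDF hα₁ hβ₁ hx).sub (hasDerivAt_betaCDF hα₂ hβ₂ hx)
  have hcont : ContinuousOn G (Icc 0 1) :=
    (continuousOn_betaCDF hα₁ hβ₁).sub (continuousOn_betaCDF hα₂ hβ₂)
  have hG0 : G 0 = 0 := by simp [G]
  have hG1 : G 1 = 0 := by simp [G, betaCDF_one hα₁ hβ₁, betaCDF_one hα₂ hβ₂]
  have hK : (log B₂ - log B₁) / (a₂ - a₁) < logKernel n m (n / (n + m)) := by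
    by_contra! h
    -- otherwise `G' > 0` away from the mode, so `G` could not return to `0`
    refine (lt_of_hasDerivAt_pos_of_ne hmode hcont hderiv fun x hx hne => ?_).ne
      (hG0.trans hG1.symm)
    exact (sub_betaKernel_div_pos_iff hx hB₁ hB₂ ha).2
      ((logKernel_lt_logKernel_mode hn hm hx hne).trans_le h)
  obtain ⟨t₁, t₂, h₁, h₁₂, h₂, hφ₁, hφ₂, hφ₃⟩ := exists_crossings_of_unimodal hmode.1 hmode.2
    (continuousOn_logKernel n m) (logKernel_strictMonoOn hn hm) (logKernel_strictAntiOn hn hm)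
    (tendsto_logKernel_nhdsGT_zero hn m) (tendsto_logKernel_nhdsLT_one n hm) hK
  obtain ⟨c, hc, hpos, hneg⟩ := exists_sign_change_of_hasDerivAt h₁ h₁₂ h₂ hcont hG0 hG1 hderiv
    (fun x hx => (sub_betaKernel_div_pos_iff ⟨hx.1, hx.2.trans (h₁₂.trans h₂)⟩ hB₁ hB₂ ha).2
      (hφ₁ x hx))
    (fun x hx => (sub_betaKernel_div_neg_iff ⟨h₁.trans hx.1, hx.2.trans h₂⟩ hB₁ hB₂ ha).2
      (hφ₂ x hx))
    (fun x hx => (sub_betaKernel_div_pos_iff ⟨(h₁.trans h₁₂).trans hx.1, hx.2⟩ hB₁ hB₂ ha).2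
      (hφ₃ x hx))
  exact ⟨c, hc, fun x hx => sub_pos.1 (hpos x hx), fun x hx => sub_neg.1 (hneg x hx)⟩

end BetaCrossing

/-- Bunching for the restricted Beta family: for n ≥ m > 0 and 0 < a₁ < a₂ there is a
unique x* ∈ (0,1) with F_{a₁} > F_{a₂} on (0,x*) and F_{a₁} < F_{a₂} on (x*,1). -/
theorem stmt_10 (n m a₁ a₂ : ℝ) (hm : 0 < m) (hnm : m ≤ n)
    (ha₁ : 0 < a₁) (ha : a₁ < a₂)
    (F : ℝ → ℝ → ℝ)
    (hF : ∀ a, ∀ x, F a x = (∫ t in (0:ℝ)..x, t ^ (n*a - 1) * (1 - t) ^ (m*a - 1))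
        / (∫ t in (0:ℝ)..1, t ^ (n*a - 1) * (1 - t) ^ (m*a - 1))) :
    ∃! xstar : ℝ, xstar ∈ Set.Ioo (0:ℝ) 1 ∧
      (∀ x ∈ Set.Ioo (0:ℝ) xstar, F a₁ x > F a₂ x) ∧
      (∀ x ∈ Set.Ioo xstar (1:ℝ), F a₁ x < F a₂ x) := by
  obtain rfl : F = fun a => betaCDF (n * a) (m * a) := funext fun a => funext (hF a)
  obtain ⟨c, hc, hlt, hgt⟩ := exists_betaCDF_crossing (hm.trans_le hnm) hm ha₁ ha
  refine ⟨c, ⟨hc, hlt, hgt⟩, fun c' ⟨hc', hlt', hgt'⟩ => le_antisymm ?_ ?_⟩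
  · exact le_of_sign_change hc.1.le hc'.2.le hlt' hgt
  · exact le_of_sign_change hc'.1.le hc.2.le hlt hgt'
end
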